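/- Let T be a countable tree with ∂T ≠ ∅ and let Γ be a countable group acting on T by tree automorphisms. If the action of Γ on T is slender, then the induced action of Γ on ∂T is strongly faithful. -/

import Mathlib

open Filter Set

section PowersDefs

/-- A Powers group: for every finite `F ⊆ Γ \ {1}` and every `N ≥ 1` there is a partition
`Γ = C ⊔ D` (here `D = Cᶜ`) and elements `g 1, …, g N` with `fC ∩ C = ∅` for `f ∈ F` and
`g j D ∩ g k D = ∅` for `j ≠ k`. -/
def IsPowersGroup (Γ : Type*) [Group Γ] : Prop :=
  Nontrivial Γ ∧
    ∀ F : Finset Γ, (1 : Γ) ∉ F → ∀ N : ℕ, 1 ≤ N →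
      ∃ (C : Set Γ) (g : Fin N → Γ),
        (∀ f ∈ F, (fun x => f * x) '' C ∩ C = ∅) ∧
        ∀ j k : Fin N, j ≠ k →
          (fun x => g j * x) '' Cᶜ ∩ (fun x => g k * x) '' Cᶜ = ∅

/-- A subgroup is subnormal if there is a finite chain of successively normal subgroups
reaching the whole group. -/
def IsSubnormalIn {Γ : Type*} [Group Γ] (N : Subgroup Γ) : Prop :=
  ∃ (k : ℕ) (c : ℕ → Subgroup Γ), c 0 = N ∧ c k = ⊤ ∧
    ∀ i < k, c i ≤ c (i + 1) ∧ ∀ x ∈ c (i + 1), ∀ y ∈ c i, x * y * x⁻¹ ∈ c i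

/-- A strongly Powers group: every nontrivial subnormal subgroup is a Powers group. -/
def IsStronglyPowersGroup (Γ : Type*) [Group Γ] : Prop :=
  ∀ N : Subgroup Γ, IsSubnormalIn N → N ≠ ⊥ → IsPowersGroup N

end PowersDefs

section TreeDefs

variable {V : Type*}

/-- A ray in a graph: a sequence of vertices with `d(x m, x n) = |m - n|`. -/
def IsRay (G : SimpleGraph V) (x : ℕ → V) : Prop :=
  ∀ m n : ℕ, G.dist (x m) (x n) = ((m : ℤ) - (n : ℤ)).natAbs

/-- Two rays are cofinal if up to an index shift they eventually coincide. -/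
def Cofinal (x y : ℕ → V) : Prop :=
  ∃ a b : ℕ, ∀ᶠ n in atTop, y (n + a) = x (n + b)

/-- The type of rays of a graph. -/
def Ray (G : SimpleGraph V) : Type _ := {x : ℕ → V // IsRay G x}

/-- The boundary of a tree: cofinality classes of rays. -/
def Boundary (G : SimpleGraph V) : Type _ :=
  Quot (fun r s : Ray G => Cofinal r.1 s.1)

/-- The boundary point represented by a ray. -/
def Boundary.mk (G : SimpleGraph V) (r : Ray G) : Boundary G := Quot.mk _ r

/-- The shadow of the oriented edge `(u, v)`: boundary points represented by rays that are
eventually strictly closer to `v` than to `u`. -/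
def Shadow (G : SimpleGraph V) (u v : V) : Set (Boundary G) :=
  {ξ | ∃ r : Ray G, Boundary.mk G r = ξ ∧
    ∀ᶠ n in atTop, G.dist v (r.1 n) < G.dist u (r.1 n)}

/-- The shadow topology on the boundary of a tree. -/
instance (G : SimpleGraph V) : TopologicalSpace (Boundary G) :=
  TopologicalSpace.generateFrom {s | ∃ u v : V, G.Adj u v ∧ s = Shadow G u v}

/-- The action of `Γ` on the vertices is by graph automorphisms. -/
def IsGraphAction (G : SimpleGraph V) (Γ : Type*) [Group Γ] [MulAction Γ V] : Prop :=
  ∀ (γ : Γ) (u v : V), G.Adj u v ↔ G.Adj (γ • u) (γ • v)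

variable {Γ : Type*} [Group Γ] [MulAction Γ V]

theorem dist_smul_eq {G : SimpleGraph V} (h : IsGraphAction G Γ) (γ : Γ) (u v : V) :
    G.dist (γ • u) (γ • v) = G.dist u v := by
  have key : ∀ (g : Γ) (a b : V), G.dist (g • a) (g • b) ≤ G.dist a b := by
    intro g a b
    by_cases hr : G.Reachable a b
    · obtain ⟨w, hw⟩ := hr.exists_walk_length_eq_dist
      have hle : G.dist (g • a) (g • b) ≤
          (w.map ⟨fun x => g • x, fun hx => (h g _ _).mp hx⟩).length :=
        SimpleGraph.dist_le _
      rwa [SimpleGraph.Walk.length_map, hw] at hle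
    · have hr2 : ¬ G.Reachable (g • a) (g • b) := by
        intro hc
        refine hr ?_
        have h' := hc.map (⟨fun x => g⁻¹ • x, fun hx => (h g⁻¹ _ _).mp hx⟩ : G →g G)
        have h'' : G.Reachable (g⁻¹ • (g • a)) (g⁻¹ • (g • b)) := h'
        simpa using h''
      rw [SimpleGraph.dist_eq_zero_of_not_reachable hr,
        SimpleGraph.dist_eq_zero_of_not_reachable hr2]
  refine le_antisymm (key γ u v) ?_
  have h2 := key γ⁻¹ (γ • u) (γ • v)
  simpa using h2

/-- The image of a ray under an automorphism. -/
def raySmul {G : SimpleGraph V} (h : IsGraphAction G Γ) (γ : Γ) (r : Ray G) : Ray G :=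
  ⟨fun n => γ • r.1 n, fun m n => by rw [dist_smul_eq h]; exact r.2 m n⟩

/-- The induced action of an automorphism on the boundary. -/
def Boundary.smul {G : SimpleGraph V} (h : IsGraphAction G Γ) (γ : Γ) :
    Boundary G → Boundary G :=
  Quot.map (raySmul h γ) (by
    rintro r s ⟨a, b, hab⟩
    exact ⟨a, b, hab.mono fun n hn => by simp only [raySmul, hn]⟩)

/-- The fixed-point set of `γ` on the boundary. -/
def FixedBoundary {G : SimpleGraph V} (h : IsGraphAction G Γ) (γ : Γ) :
    Set (Boundary G) :=
  {ξ | Boundary.smul h γ ξ = ξ}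

/-- A slender action: every nontrivial element has a fixed-point set with empty interior in
the boundary. -/
def SlenderAction {G : SimpleGraph V} (h : IsGraphAction G Γ) : Prop :=
  ∀ γ : Γ, γ ≠ 1 → interior (FixedBoundary h γ) = ∅

/-- A minimal action on a tree: no nonempty proper invariant subtree. -/
def MinimalTreeAction (G : SimpleGraph V) (Γ : Type*) [Group Γ] [MulAction Γ V] : Prop :=
  ∀ S : Set V, S.Nonempty → (∀ (γ : Γ), ∀ v ∈ S, γ • v ∈ S) →
    (G.induce S).Connected → S = Set.univ

/-- An inversion of a graph. -/
def IsInversionAut (G : SimpleGraph V) (γ : Γ) : Prop :=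
  ∃ u v : V, G.Adj u v ∧ γ • u = v ∧ γ • v = u

/-- An elliptic automorphism: one fixing a vertex. -/
def IsEllipticAut (V : Type*) [MulAction Γ V] (γ : Γ) : Prop := ∃ v : V, γ • v = v

/-- A hyperbolic automorphism: neither elliptic nor an inversion. -/
def IsHyperbolicAut (G : SimpleGraph V) (γ : Γ) : Prop :=
  ¬ IsEllipticAut V γ ∧ ¬ IsInversionAut G γ

/-- The axis of an automorphism: the set of vertices minimizing the displacement
`d(x, γ x)`. -/
def Axis (G : SimpleGraph V) (γ : Γ) : Set V :=
  {x : V | ∀ y : V, G.dist x (γ • x) ≤ G.dist y (γ • y)}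

/-- Two automorphisms are transverse if the intersection of their axes is finite. -/
def Transverse (G : SimpleGraph V) (γ δ : Γ) : Prop :=
  (Axis G γ ∩ Axis G δ).Finite

/-- A strongly hyperbolic action on a tree: it admits a pair of transverse hyperbolic
elements. -/
def StronglyHyperbolicTreeAction (G : SimpleGraph V) (Γ : Type*) [Group Γ] [MulAction Γ V] :
    Prop :=
  ∃ γ δ : Γ, IsHyperbolicAut G γ ∧ IsHyperbolicAut G δ ∧ Transverse G γ δ

/-- A pending ray: a ray whose vertices eventually all have degree two. -/
def IsPendingRay (G : SimpleGraph V) (x : ℕ → V) : Prop :=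
  IsRay G x ∧ ∀ᶠ n in atTop, (G.neighborSet (x n)).ncard = 2

/-- A linear tree: its vertex set is an enumeration `(x n), n ∈ ℤ` with
`d(x m, x n) = |m - n|`. -/
def IsLinearTree (G : SimpleGraph V) : Prop :=
  ∃ x : ℤ → V, Function.Surjective x ∧
    ∀ m n : ℤ, G.dist (x m) (x n) = (m - n).natAbs

end TreeDefs

/-!
If `γ ξ ≠ ξ`, a ray `t` representing `ξ` and the ray `γ t` are not cofinal. Take a pair of
vertices `t i`, `γ t j` at minimal distance from which the two rays take different next steps;
since a tree has no cycles, the edges `(t i, t (i+1))` and `(γ t j, γ t (j+1))` then point away from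
each other and their half-trees are disjoint. Half-trees shrink along a ray, so for `n = max i j`
the shadow of the edge `(t n, t (n+1))` is an open neighbourhood of `ξ` disjoint from its image
under `γ`. Hence fixed-point sets on `∂T` are closed; for a slender action those of `γ ≠ 1` are
closed with empty interior, and finitely many of them cannot cover the nonempty boundary.
-/

namespace SimpleGraph

variable {V : Type*} {G : SimpleGraph V}

/-- The shadow `Shadow G u v` is the set of ends of this half-tree. -/
def halfTree (G : SimpleGraph V) (u v : V) : Set V := {x | G.dist x v < G.dist x u}

theorem mem_halfTree {u v x : V} : x ∈ G.halfTree u v ↔ G.dist x v < G.dist x u := Iff.rfl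

theorem Reachable.exists_adj_dist_lt {a v : V} (h : G.Reachable a v) (hne : a ≠ v) :
    ∃ a', G.Adj a a' ∧ G.dist a' v < G.dist a v := by
  obtain ⟨p, hp⟩ := h.exists_walk_length_eq_dist
  cases p with
  | nil => exact absurd rfl hne
  | cons hadj q =>
    refine ⟨_, hadj, ?_⟩
    have := dist_le q
    rw [Walk.length_cons] at hp
    omega

theorem IsAcyclic.eq_of_adj_of_dist_lt (hG : G.IsAcyclic) {z w₁ w₂ x : V} (h₁ : G.Adj z w₁)
    (h₂ : G.Adj z w₂) (d₁ : G.dist w₁ x < G.dist z x) (d₂ : G.dist w₂ x < G.dist z x) :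
    w₁ = w₂ := by
  have hzx : G.Reachable z x := Reachable.of_dist_ne_zero (by omega)
  have geodesic_through : ∀ {w}, (h : G.Adj z w) → G.dist w x < G.dist z x →
      ∃ p : G.Walk w x, (Walk.cons h p).IsPath := by
    intro w h hd
    obtain ⟨p, -, hp⟩ := (h.symm.reachable.trans hzx).exists_path_of_dist
    refine ⟨p, Walk.isPath_of_length_eq_dist _ (le_antisymm ?_ (dist_le _))⟩
    rw [Walk.length_cons, hp]
    omega
  obtain ⟨p₁, hp₁⟩ := geodesic_through h₁ d₁
  obtain ⟨p₂, hp₂⟩ := geodesic_through h₂ d₂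
  simpa using congrArg (fun p : G.Path z x => p.1.snd)
    (hG.subsingleton_path z x |>.elim ⟨_, hp₁⟩ ⟨_, hp₂⟩)

namespace IsTree

theorem eq_of_adj_of_mem_halfTree (hT : G.IsTree) {u v a b : V} (huv : G.Adj u v)
    (hab : G.Adj a b) (ha : a ∈ G.halfTree u v) (hb : b ∈ G.halfTree v u) :
    a = v ∧ b = u := by
  rw [mem_halfTree] at ha hb
  have hbv : G.dist b v ≤ G.dist b a + G.dist a v := hT.connected.dist_triangle
  have hau : G.dist a u ≤ G.dist a b + G.dist b u := hT.connected.dist_triangle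
  have hab₁ : G.dist a b = 1 := dist_eq_one_iff_adj.mpr hab
  have hba₁ : G.dist b a = 1 := dist_eq_one_iff_adj.mpr hab.symm
  have hside := hT.dist_eq_dist_add_one_of_adj a huv
  by_cases hav : a = v
  · subst hav
    have : G.dist a a = 0 := dist_self
    exact ⟨rfl, hT.connected.dist_eq_zero_iff.mp (by omega)⟩
  -- a step from `a` towards `v` also approaches `u`, so it is `b`; but `b` moves away from `v`
  · obtain ⟨a', haa', ha'⟩ := (hT.connected a v).exists_adj_dist_lt hav
    have ha'u : G.dist a' u ≤ G.dist a' v + G.dist v u := hT.connected.dist_triangle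
    have hvu : G.dist v u = 1 := dist_eq_one_iff_adj.mpr huv.symm
    obtain rfl := hT.isAcyclic.eq_of_adj_of_dist_lt haa' hab (x := u) (by omega) (by omega)
    omega

theorem dist_add_one_add_dist_le_length (hT : G.IsTree) {u v x y : V} (huv : G.Adj u v)
    (W : G.Walk x y) (hx : x ∈ G.halfTree u v) (hy : y ∈ G.halfTree v u) :
    G.dist x v + 1 + G.dist u y ≤ W.length := by
  induction W with
  | nil => exact (lt_asymm (mem_halfTree.mp hx) hy).elim
  | @cons x x' y hxx' W ih =>
    rw [Walk.length_cons]
    rcases hT.dist_eq_dist_add_one_of_adj x' huv with h | h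
    · have hW := ih (by rw [mem_halfTree]; omega) hy
      have hxv : G.dist x v ≤ G.dist x x' + G.dist x' v := hT.connected.dist_triangle
      have hxx'₁ : G.dist x x' = 1 := dist_eq_one_iff_adj.mpr hxx'
      omega
    · obtain ⟨rfl, rfl⟩ :=
        hT.eq_of_adj_of_mem_halfTree huv hxx' hx (by rw [mem_halfTree]; omega)
      have hW := dist_le W
      simp only [dist_self]
      omega

theorem dist_eq_of_mem_halfTree (hT : G.IsTree) {u v x y : V} (huv : G.Adj u v)
    (hx : x ∈ G.halfTree u v) (hy : y ∈ G.halfTree v u) :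
    G.dist x y = G.dist x v + 1 + G.dist u y := by
  obtain ⟨W, hW⟩ := hT.connected.exists_walk_length_eq_dist x y
  refine le_antisymm ?_ (hW ▸ hT.dist_add_one_add_dist_le_length huv W hx hy)
  have hxy : G.dist x y ≤ G.dist x v + G.dist v y := hT.connected.dist_triangle
  have hvy : G.dist v y ≤ G.dist v u + G.dist u y := hT.connected.dist_triangle
  have hvu : G.dist v u = 1 := dist_eq_one_iff_adj.mpr huv.symm
  omega

theorem disjoint_halfTree (hT : G.IsTree) {u v u' v' : V} (huv : G.Adj u v)
    (hu'v' : G.Adj u' v') (h : v' ∈ G.halfTree v u) (h' : v ∈ G.halfTree v' u') :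
    Disjoint (G.halfTree u v) (G.halfTree u' v') := by
  rw [Set.disjoint_left]
  intro w hw hw'
  have hwv' := hT.dist_eq_of_mem_halfTree huv hw h
  have hwv := hT.dist_eq_of_mem_halfTree hu'v' hw' h'
  omega

theorem disjoint_halfTree_of_dist_eq (hT : G.IsTree) {u v u' v' : V} (huv : G.Adj u v)
    (hu'v' : G.Adj u' v') (hvv' : v ≠ v') (h : G.dist v u' = G.dist u u' + 1)
    (h' : G.dist u v' = G.dist u u' + 1) :
    Disjoint (G.halfTree u v) (G.halfTree u' v') := by
  have := G.dist_comm (u := u) (v := v')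
  have := G.dist_comm (u := v) (v := v')
  have := G.dist_comm (u := u) (v := u')
  have hvv'_pos : 0 < G.dist v v' := hT.connected.pos_dist_of_ne hvv'
  have hvv'_dist : G.dist v v' = G.dist u u' + 2 := by
    rcases hT.dist_eq_dist_add_one_of_adj v' huv with e | e
    · -- the geodesic from `v` to `u` would run through `v'` and `u'`
      have := hT.dist_eq_of_mem_halfTree hu'v' (x := v) (y := u)
        (by rw [mem_halfTree]; omega) (by rw [mem_halfTree]; omega)
      have : G.dist v u = 1 := dist_eq_one_iff_adj.mpr huv.symm
      omega
    · omega
  exact hT.disjoint_halfTree huv hu'v' (by rw [mem_halfTree]; omega)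
    (by rw [mem_halfTree]; omega)

theorem halfTree_subset_halfTree (hT : G.IsTree) {a b c : V} (hab : G.Adj a b)
    (hbc : G.Adj b c) (hac : a ≠ c) : G.halfTree b c ⊆ G.halfTree a b := by
  intro x hx
  rw [mem_halfTree] at hx ⊢
  by_contra hle
  have := G.dist_comm (u := x) (v := a)
  have := G.dist_comm (u := x) (v := b)
  have := G.dist_comm (u := x) (v := c)
  rcases hT.dist_eq_dist_add_one_of_adj x hab with e | e
  · omega
  · exact hac (hT.isAcyclic.eq_of_adj_of_dist_lt hab.symm hbc (x := x) (by omega) (by omega))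

end IsTree

end SimpleGraph

open SimpleGraph

namespace IsRay

variable {V : Type*} {G : SimpleGraph V} {r : ℕ → V}

theorem dist_eq (hr : IsRay G r) {m n : ℕ} (h : m ≤ n) : G.dist (r m) (r n) = n - m := by
  rw [hr m n]
  omega

theorem adj (hr : IsRay G r) (n : ℕ) : G.Adj (r n) (r (n + 1)) :=
  dist_eq_one_iff_adj.mp (by rw [hr.dist_eq n.le_succ]; omega)

theorem antitone_halfTree (hT : G.IsTree) (hr : IsRay G r) :
    Antitone fun n => G.halfTree (r n) (r (n + 1)) :=
  antitone_nat_of_succ_le fun n => hT.halfTree_subset_halfTree (hr.adj n) (hr.adj (n + 1))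
    fun h => by simpa [h] using hr.dist_eq (Nat.le_add_right n 2)

theorem mk_mem_shadow (hr : IsRay G r) (n : ℕ) :
    Boundary.mk G ⟨r, hr⟩ ∈ Shadow G (r n) (r (n + 1)) :=
  ⟨⟨r, hr⟩, rfl, eventually_atTop.mpr ⟨n + 1, fun m hm => by
    change G.dist (r (n + 1)) (r m) < G.dist (r n) (r m)
    rw [hr.dist_eq hm, hr.dist_eq (by omega)]
    omega⟩⟩

end IsRay

namespace Cofinal

variable {V : Type*} {x y z : ℕ → V}

theorem refl (x : ℕ → V) : Cofinal x x := ⟨0, 0, .of_forall fun _ => rfl⟩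

theorem symm (h : Cofinal x y) : Cofinal y x :=
  let ⟨a, b, h⟩ := h
  ⟨b, a, h.mono fun _ => Eq.symm⟩

theorem trans (h₁ : Cofinal x y) (h₂ : Cofinal y z) : Cofinal x z := by
  obtain ⟨a, b, h₁⟩ := h₁
  obtain ⟨c, d, h₂⟩ := h₂
  refine ⟨a + c, b + d, ?_⟩
  filter_upwards [(tendsto_add_atTop_nat d).eventually h₁,
    (tendsto_add_atTop_nat a).eventually h₂] with n e₁ e₂
  calc z (n + (a + c)) = y (n + d + a) := by rw [← add_assoc, e₂, add_right_comm]
    _ = x (n + (b + d)) := by rw [e₁, add_right_comm, add_assoc]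

end Cofinal

section Shadow

variable {V : Type*} {G : SimpleGraph V}

theorem Boundary.mk_eq_mk_iff {r s : Ray G} :
    Boundary.mk G r = Boundary.mk G s ↔ Cofinal r.1 s.1 :=
  Quot.eq.trans (Equivalence.eqvGen_iff ⟨fun r => Cofinal.refl r.1, Cofinal.symm, Cofinal.trans⟩)

theorem isOpen_shadow {u v : V} (huv : G.Adj u v) : IsOpen (Shadow G u v) :=
  TopologicalSpace.GenerateOpen.basic _ ⟨u, v, huv, rfl⟩

theorem disjoint_shadow {u v u' v' : V} (h : Disjoint (G.halfTree u v) (G.halfTree u' v')) :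
    Disjoint (Shadow G u v) (Shadow G u' v') := by
  rw [Set.disjoint_left]
  rintro _ ⟨r, rfl, hr⟩ ⟨s, hsr, hs⟩
  obtain ⟨a, b, hab⟩ := Boundary.mk_eq_mk_iff.mp hsr
  obtain ⟨n, hrn, hsn, he⟩ := ((tendsto_add_atTop_nat a).eventually hr |>.and <|
    (tendsto_add_atTop_nat b).eventually hs |>.and hab).exists
  have h₁ : r.1 (n + a) ∈ G.halfTree u v := by simpa [mem_halfTree, dist_comm] using hrn
  have h₂ : r.1 (n + a) ∈ G.halfTree u' v' := by simpa [mem_halfTree, dist_comm, he] using hsn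
  exact Set.disjoint_left.mp h h₁ h₂

variable {Γ : Type*} [Group Γ] [MulAction Γ V]

theorem Boundary.smul_mem_shadow (hact : IsGraphAction G Γ) (γ : Γ) {u v : V} {ξ : Boundary G}
    (h : ξ ∈ Shadow G u v) : Boundary.smul hact γ ξ ∈ Shadow G (γ • u) (γ • v) := by
  obtain ⟨r, rfl, hr⟩ := h
  exact ⟨raySmul hact γ r, rfl, hr.mono fun n hn => by
    simpa only [raySmul, dist_smul_eq hact] using hn⟩

end Shadow

namespace SimpleGraph

variable {V : Type*} {G : SimpleGraph V} {r s : ℕ → V}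

theorem Connected.exists_minimal_dist_ne_of_not_cofinal (hG : G.Connected)
    (h : ¬ Cofinal r s) : ∃ i j, (∀ i' j', G.dist (r i) (s j) ≤ G.dist (r i') (s j')) ∧
      r (i + 1) ≠ s (j + 1) := by
  obtain ⟨⟨i, j⟩, hmin⟩ : ∃ p : ℕ × ℕ, ∀ q : ℕ × ℕ,
      G.dist (r p.1) (s p.2) ≤ G.dist (r q.1) (s q.2) :=
    ⟨_, fun q => Function.argmin_le (fun p : ℕ × ℕ => G.dist (r p.1) (s p.2)) q⟩
  by_contra! hsplit
  have hzero : G.dist (r i) (s j) = 0 := by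
    simpa [hsplit i j fun i' j' => hmin (i', j')] using hmin (i + 1, j + 1)
  have hdiag : ∀ k, r (i + k) = s (j + k) := by
    intro k
    induction k with
    | zero => exact hG.dist_eq_zero_iff.mp hzero
    | succ k ih => exact hsplit (i + k) (j + k) fun _ _ => by simp [ih]
  exact h ⟨j, i, .of_forall fun n => by rw [add_comm, ← hdiag, add_comm]⟩

theorem IsTree.exists_disjoint_halfTree_of_not_cofinal (hT : G.IsTree) (hr : IsRay G r)
    (hs : IsRay G s) (h : ¬ Cofinal r s) :
    ∃ n, Disjoint (G.halfTree (r n) (r (n + 1))) (G.halfTree (s n) (s (n + 1))) := by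
  obtain ⟨i, j, hmin, hne⟩ := hT.connected.exists_minimal_dist_ne_of_not_cofinal h
  have h₁ : G.dist (r (i + 1)) (s j) = G.dist (r i) (s j) + 1 := by
    have hle := hmin (i + 1) j
    have := G.dist_comm (u := r i) (v := s j)
    have := G.dist_comm (u := r (i + 1)) (v := s j)
    rcases hT.dist_eq_dist_add_one_of_adj (s j) (hr.adj i) with e | e <;> omega
  have h₂ : G.dist (r i) (s (j + 1)) = G.dist (r i) (s j) + 1 := by
    have hle := hmin i (j + 1)
    rcases hT.dist_eq_dist_add_one_of_adj (r i) (hs.adj j) with e | e <;> omega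
  exact ⟨max i j, Disjoint.mono (hr.antitone_halfTree hT (le_max_left i j))
    (hs.antitone_halfTree hT (le_max_right i j))
    (hT.disjoint_halfTree_of_dist_eq (hr.adj i) (hs.adj j) hne h₁ h₂)⟩

end SimpleGraph

theorem isClosed_fixedBoundary {V : Type*} {G : SimpleGraph V} (hT : G.IsTree) {Γ : Type*}
    [Group Γ] [MulAction Γ V] (hact : IsGraphAction G Γ) (γ : Γ) :
    IsClosed (FixedBoundary hact γ) := by
  refine isOpen_compl_iff.mp (isOpen_iff_forall_mem_open.mpr fun ξ hξ => ?_)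
  obtain ⟨r, rfl⟩ := Quot.exists_rep ξ
  have hnc : ¬ Cofinal r.1 (raySmul hact γ r).1 := fun hc =>
    hξ (Boundary.mk_eq_mk_iff.mpr hc.symm)
  obtain ⟨n, hn⟩ := hT.exists_disjoint_halfTree_of_not_cofinal r.2 (raySmul hact γ r).2 hnc
  refine ⟨Shadow G (r.1 n) (r.1 (n + 1)), fun η hη hfix => ?_, isOpen_shadow (r.2.adj n),
    r.2.mk_mem_shadow n⟩
  have hγη := Boundary.smul_mem_shadow hact γ hη
  rw [show Boundary.smul hact γ η = η from hfix] at hγη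
  exact Set.disjoint_left.mp (disjoint_shadow hn) hη hγη

theorem interior_biUnion_finset_eq_empty {X ι : Type*} [TopologicalSpace X] {f : ι → Set X}
    (s : Finset ι) (hc : ∀ i ∈ s, IsClosed (f i)) (he : ∀ i ∈ s, interior (f i) = ∅) :
    interior (⋃ i ∈ s, f i) = ∅ := by
  classical
  induction s using Finset.induction_on with
  | empty => simp
  | insert a s _ ih =>
    rw [Finset.set_biUnion_insert, interior_union_isClosed_of_interior_empty
      (hc a (s.mem_insert_self a))
      (ih (fun i hi => hc i (Finset.mem_insert_of_mem hi))
        (fun i hi => he i (Finset.mem_insert_of_mem hi)))]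
    exact he a (s.mem_insert_self a)

section Statements

variable {V : Type*}

theorem statement8_general (G : SimpleGraph V) (hT : G.IsTree)
    (hne : Nonempty (Boundary G))
    {Γ : Type*} [Group Γ] [MulAction Γ V]
    (hact : IsGraphAction G Γ) (hslender : SlenderAction hact) :
    ∀ F : Finset Γ, (1 : Γ) ∉ F →
      ∃ ξ : Boundary G, ∀ γ ∈ F, Boundary.smul hact γ ξ ≠ ξ := by
  intro F hF
  have hint : interior (⋃ γ ∈ F, FixedBoundary hact γ) = ∅ :=
    interior_biUnion_finset_eq_empty F (fun γ _ => isClosed_fixedBoundary hT hact γ)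
      fun γ hγ => hslender γ (ne_of_mem_of_not_mem hγ hF)
  obtain ⟨ξ, hξ⟩ := (interior_eq_empty_iff_dense_compl.mp hint).nonempty
  exact ⟨ξ, fun γ hγ hfix => hξ (mem_biUnion hγ hfix)⟩

theorem statement8 [Countable V] (G : SimpleGraph V) (hT : G.IsTree)
    (hne : Nonempty (Boundary G))
    {Γ : Type*} [Group Γ] [Countable Γ] [MulAction Γ V]
    (hact : IsGraphAction G Γ) (hslender : SlenderAction hact) :
    ∀ F : Finset Γ, (1 : Γ) ∉ F →
      ∃ ξ : Boundary G, ∀ γ ∈ F, Boundary.smul hact γ ξ ≠ ξ :=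
  statement8_general G hT hne hact hslender

end Statements
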